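/- arXiv:1803.10918 — 2 statements merged into one kernel-verified Lean document; each statement's English description precedes it below -/
import Mathlib

section
/- The operator η is S_{n+m}-equivariant: for every σ in the symmetric group S_N (N = n+m) and every v in M̃, one has η(σ·v) = σ·η(v). -/
open Finset

/-- Number of inversions of a list. -/
def invCount {α : Type*} [LinearOrder α] (l : List α) : ℕ :=
  (Finset.univ.filter
    (fun p : Fin l.length × Fin l.length => p.1 < p.2 ∧ l.get p.2 < l.get p.1)).card

/-- The sign `(-1)^(number of inversions)` of the permutation sorting a list
with pairwise distinct entries into increasing order. -/
noncomputable def invSign {α : Type*} [LinearOrder α] (l : List α) : ℂ :=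
  (-1) ^ invCount l

/-- Replace the entry `a` by `b` (in place) in a list. -/
def replaceOne {α : Type*} [DecidableEq α] (l : List α) (a b : α) : List α :=
  l.map fun z => if z = a then b else z

open scoped Classical in
/-- Dirac delta: the basis vector corresponding to an index `r`. -/
noncomputable def delta {β : Type*} (r : β) : β → ℂ := fun r' => if r' = r then 1 else 0

/-- Index for the basis of ordered column tabloids of shape `(2^m, 1^{n-m})` on
`{1, …, n+m}` (identified with `Fin (n+m)`): such a tabloid is recorded by the
set `T` of entries of its first column (the second column is the complement). -/
abbrev Col (n m : ℕ) := {T : Finset (Fin (n + m)) // T.card = n}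

/-- The space `M̃` of column tabloids of shape `(2^m, 1^{n-m})`. -/
abbrev Mt (n m : ℕ) := Col n m → ℂ

lemma card_compl' {n m : ℕ} (T : Col n m) : (T.1ᶜ).card = m := by
  rw [Finset.card_compl, T.2, Fintype.card_fin]
  omega

/-- `yel T j` is the `(j+1)`-st smallest element of the complement of `T`
(i.e. of the second column). -/
noncomputable def yel {n m : ℕ} (T : Col n m) (j : Fin m) : Fin (n + m) :=
  (T.1ᶜ).orderEmbOfFin (card_compl' T) j

lemma yel_not_mem {n m : ℕ} (T : Col n m) (j : Fin m) : yel T j ∉ T.1 :=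
  Finset.mem_compl.mp (Finset.orderEmbOfFin_mem (T.1ᶜ) (card_compl' T) j)

/-- The first column obtained from `T` after exchanging `x ∈ T` with the
`(j+1)`-st smallest element of the complement. -/
noncomputable def swapSet {n m : ℕ} (T : Col n m) (x : Fin (n + m)) (j : Fin m) :
    Finset (Fin (n + m)) :=
  insert (yel T j) (T.1.erase x)

lemma swapSet_card {n m : ℕ} (T : Col n m) {x : Fin (n + m)} (hx : x ∈ T.1) (j : Fin m) :
    (swapSet T x j).card = n := by
  have h0 : 0 < n := T.2 ▸ Finset.card_pos.mpr ⟨x, hx⟩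
  rw [swapSet, Finset.card_insert_of_notMem
      (fun h => yel_not_mem T j (Finset.mem_of_mem_erase h)),
    Finset.card_erase_of_mem hx, T.2]
  omega

/-- `swap_{x,j}(T)`: the signed basis vector obtained from `T` by exchanging
`x` (in the first column) with the `(j+1)`-st entry of the second column in
place, the sign `ε` being the product of the signs of the two permutations
re-sorting the two columns. -/
noncomputable def swapTerm {n m : ℕ} (T : Col n m) (x : {a // a ∈ T.1}) (j : Fin m) :
    Mt n m :=
  (invSign (replaceOne (T.1.sort (· ≤ ·)) x.1 (yel T j)) *
      invSign (replaceOne ((T.1ᶜ).sort (· ≤ ·)) (yel T j) x.1)) •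
    delta (⟨swapSet T x.1 j, swapSet_card T x.2 j⟩ : Col n m)

/-- The operator `η` on the basis vector `v_T`. -/
noncomputable def etaBasis {n m : ℕ} (T : Col n m) : Mt n m :=
  (m : ℂ) • delta T - ∑ j : Fin m, ∑ x ∈ T.1.attach, swapTerm T x j

/-- The operator `η : M̃ → M̃`, extended linearly from the basis. -/
noncomputable def etaFun {n m : ℕ} (f : Mt n m) : Mt n m :=
  ∑ T : Col n m, f T • etaBasis T

/-- `η` as a linear map. -/
noncomputable def etaLin (n m : ℕ) : Mt n m →ₗ[ℂ] Mt n m where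
  toFun := etaFun
  map_add' f g := by
    simp [etaFun, add_smul, Finset.sum_add_distrib]
  map_smul' c f := by
    simp [etaFun, Finset.smul_sum, smul_smul]

/-- The sign picked up when re-sorting the two columns after relabelling by `σ`. -/
noncomputable def actSign {n m : ℕ} (σ : Equiv.Perm (Fin (n + m))) (T : Col n m) : ℂ :=
  invSign ((T.1.sort (· ≤ ·)).map ⇑σ) * invSign (((T.1ᶜ).sort (· ≤ ·)).map ⇑σ)

lemma image_card {n m : ℕ} (σ : Equiv.Perm (Fin (n + m))) (T : Col n m) :
    (T.1.image ⇑σ).card = n := by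
  rw [Finset.card_image_of_injective _ σ.injective, T.2]

/-- The (signed) action of `S_{n+m}` on the space of column tabloids:
`σ • v_T = sgn(sort₁) sgn(sort₂) v_{σ(T)}`, extended linearly. -/
noncomputable def act {n m : ℕ} (σ : Equiv.Perm (Fin (n + m))) (f : Mt n m) : Mt n m :=
  ∑ T : Col n m, f T •
    (actSign σ T • delta (⟨T.1.image ⇑σ, image_card σ T⟩ : Col n m))

section SpechtSide

variable (γ : Type*) [Fintype γ] [DecidableEq γ] (p q : ℕ)

/-- A bijective Young tableau of the two-column shape with column lengths
`p` (first column) and `q` (second column), with entries in `γ`: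
a bijection from the cells to the entries. -/
abbrev Tabl := (Fin p ⊕ Fin q) ≃ γ

/-- `rows` is a row tabloid of shape `(2^q, 1^{p-q})`: the first `q` rows are
unordered pairs, the remaining rows singletons, all pairwise disjoint
(together they then necessarily partition `γ`). -/
def IsRowTab (rows : Fin p → Finset γ) : Prop :=
  (∀ i, (rows i).card = if (i : ℕ) < q then 2 else 1) ∧
  ∀ i j, i ≠ j → Disjoint (rows i) (rows j)

/-- Row tabloids of shape `(2^q, 1^{p-q})`. -/
abbrev RowTab := {rows : Fin p → Finset γ // IsRowTab γ p q rows}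

/-- The permutation module `M^{(2^q,1^{p-q})}`, with basis the row tabloids. -/
abbrev MP := RowTab γ p q → ℂ

variable {γ p q}

/-- The rows of a tableau. -/
def rowsOf (t : Tabl γ p q) : Fin p → Finset γ := fun i =>
  if h : (i : ℕ) < q then {t (Sum.inl i), t (Sum.inr ⟨(i : ℕ), h⟩)}
  else {t (Sum.inl i)}

lemma mem_rowsOf {t : Tabl γ p q} {i : Fin p} {a : γ} (ha : a ∈ rowsOf t i) :
    a = t (Sum.inl i) ∨ ∃ h : (i : ℕ) < q, a = t (Sum.inr ⟨(i : ℕ), h⟩) := by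
  unfold rowsOf at ha
  split_ifs at ha with h
  · rcases Finset.mem_insert.mp ha with h1 | h1
    · exact Or.inl h1
    · exact Or.inr ⟨h, Finset.mem_singleton.mp h1⟩
  · exact Or.inl (Finset.mem_singleton.mp ha)

lemma isRowTab_rowsOf (t : Tabl γ p q) : IsRowTab γ p q (rowsOf t) := by
  constructor
  · intro i
    by_cases h : (i : ℕ) < q
    · rw [rowsOf, dif_pos h, if_pos h]
      exact Finset.card_pair (t.injective.ne (by simp))
    · rw [rowsOf, dif_neg h, if_neg h]
      exact Finset.card_singleton _
  · intro i j hij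
    rw [Finset.disjoint_left]
    intro a ha hb
    rcases mem_rowsOf ha with h1 | ⟨hi, h1⟩ <;> rcases mem_rowsOf hb with h2 | ⟨hj, h2⟩
    · exact hij (Sum.inl.inj (t.injective (h1.symm.trans h2)))
    · exact Sum.inl_ne_inr (t.injective (h1.symm.trans h2))
    · exact Sum.inr_ne_inl (t.injective (h1.symm.trans h2))
    · refine hij (Fin.ext ?_)
      have h3 := Sum.inr.inj (t.injective (h1.symm.trans h2))
      simpa using congrArg Fin.val h3

/-- The row tabloid `{t}` of a tableau `t`. -/
def rowTabOf (t : Tabl γ p q) : RowTab γ p q := ⟨rowsOf t, isRowTab_rowsOf t⟩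

/-- The column stabilizer `C_t` of a tableau: permutations preserving each
column setwise. -/
def colStab (t : Tabl γ p q) : Finset (Equiv.Perm γ) :=
  Finset.univ.filter fun σ =>
    (∀ i : Fin p, ∃ i' : Fin p, σ (t (Sum.inl i)) = t (Sum.inl i')) ∧
    (∀ j : Fin q, ∃ j' : Fin q, σ (t (Sum.inr j)) = t (Sum.inr j'))

/-- The polytabloid `ε_t = ∑_{β ∈ C_t} sgn(β) {β t}`. -/
noncomputable def polytab (t : Tabl γ p q) : MP γ p q :=
  ∑ σ ∈ colStab t, ((Equiv.Perm.sign σ : ℤ) : ℂ) • delta (rowTabOf (t.trans σ))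

variable (γ p q) in
/-- The Specht module `S^{(2^q,1^{p-q})}`: the span of all polytabloids. -/
noncomputable def SpechtMod : Submodule ℂ (MP γ p q) :=
  Submodule.span ℂ (Set.range (polytab (γ := γ) (p := p) (q := q)))

/-- The entrywise action of a permutation on a row tabloid. -/
def rowAct (σ : Equiv.Perm γ) (r : RowTab γ p q) : RowTab γ p q :=
  ⟨fun i => (r.1 i).image ⇑σ, by
    obtain ⟨h1, h2⟩ := r.2
    refine ⟨fun i => ?_, fun i j hij => ?_⟩
    · rw [Finset.card_image_of_injective _ σ.injective]; exact h1 i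
    · exact (Finset.disjoint_image σ.injective).mpr (h2 i j hij)⟩

/-- The entrywise `S_N`-action on the permutation module. -/
noncomputable def actP (σ : Equiv.Perm γ) (f : MP γ p q) : MP γ p q :=
  fun r => f (rowAct σ⁻¹ r)

end SpechtSide

/-- The tableau `t(T)` whose first column is `T` in increasing order and whose
second column is the complement of `T` in increasing order. -/
noncomputable def tabOf {n m : ℕ} (T : Col n m) : Tabl (Fin (n + m)) n m :=
  Equiv.ofBijective
    (Sum.elim (fun i => T.1.orderEmbOfFin T.2 i)
      (fun j => (T.1ᶜ).orderEmbOfFin (card_compl' T) j))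
    (by
      rw [Fintype.bijective_iff_injective_and_card]
      refine ⟨?_, by simp⟩
      rintro (i | i) (j | j) h <;> simp only [Sum.elim_inl, Sum.elim_inr] at h
      · exact congrArg Sum.inl ((T.1.orderEmbOfFin T.2).injective h)
      · have h1 := Finset.orderEmbOfFin_mem T.1 T.2 i
        have h2 := Finset.orderEmbOfFin_mem (T.1ᶜ) (card_compl' T) j
        rw [h] at h1
        simp only [Finset.mem_compl] at h2
        exact absurd h1 h2
      · have h1 := Finset.orderEmbOfFin_mem T.1 T.2 j
        have h2 := Finset.orderEmbOfFin_mem (T.1ᶜ) (card_compl' T) i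
        rw [← h] at h1
        simp only [Finset.mem_compl] at h2
        exact absurd h1 h2
      · exact congrArg Sum.inr (((T.1ᶜ).orderEmbOfFin (card_compl' T)).injective h))

/-- The `S_N`-equivariant map `α : M̃ → M^{(2^m,1^{n-m})}`, sending `v_T` to the
polytabloid `ε_{t(T)}` (its image is the Specht module). -/
noncomputable def alphaLin (n m : ℕ) : Mt n m →ₗ[ℂ] MP (Fin (n + m)) n m where
  toFun f := ∑ T : Col n m, f T • polytab (tabOf T)
  map_add' f g := by simp [add_smul, Finset.sum_add_distrib]
  map_smul' c f := by simp [Finset.smul_sum, smul_smul]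

/-- `φ(v_T)`, encoding the generalized Jacobi identity (for shape `(2^{n-1},1)`,
i.e. `n = m + 1`):
`φ(v_T) = v_T − ∑_{i=1}^n (−1)^{n−i} sgn(c_i) v_{Tᶜ ∪ {x_i}}` where
`x_i` is the `i`-th smallest element of `T` and `c_i` sorts `(y_1,…,y_{n−1},x_i)`. -/
noncomputable def phiBasis {n m : ℕ} (h : n = m + 1) (T : Col n m) : Mt n m :=
  delta T - ∑ i : Fin n,
    ((-1 : ℂ) ^ (n - 1 - (i : ℕ)) *
        invSign ((T.1ᶜ).sort (· ≤ ·) ++ [T.1.orderEmbOfFin T.2 i])) •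
      delta (⟨insert (T.1.orderEmbOfFin T.2 i) T.1ᶜ, by
        rw [Finset.card_insert_of_notMem (by
            simpa using Finset.orderEmbOfFin_mem T.1 T.2 i),
          card_compl']
        omega⟩ : Col n m)

/-- The map `φ : M̃ → M̃`, extended linearly; `ker φ ≅ ρ_{n,3}`. -/
noncomputable def phiFun {n m : ℕ} (h : n = m + 1) (f : Mt n m) : Mt n m :=
  ∑ T : Col n m, f T • phiBasis h T

/-- `φ` as a linear map. -/
noncomputable def phiLin (n m : ℕ) (h : n = m + 1) : Mt n m →ₗ[ℂ] Mt n m where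
  toFun := phiFun h
  map_add' f g := by simp [phiFun, add_smul, Finset.sum_add_distrib]
  map_smul' c f := by simp [phiFun, Finset.smul_sum, smul_smul]

/-!
The sign `actSign σ T` is a cocycle: the sign of the permutation sorting `g (h a₁), …, g (h aₖ)`
(for `a₁ < ⋯ < aₖ`) is the sign for `h` times the sign for `g` on the sorted set `h {a₁, …, aₖ}`.
Hence `act` is a genuine action of `S_N`. Exchanging `x ∈ T` with `y ∉ T` in place is applying
the transposition `(x y)` to both columns, so `swap_{x,j}(T) = (x y_j)·v_T` and
`η v_T = m v_T − ∑_{x ∈ T, y ∉ T} (x y)·v_T`. Since `σ (x y) = (σx σy) σ`, applying `σ` to this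
sum gives the same sum for `σ(T)`, scaled by the sign of `σ·v_T`.
-/

section InversionSign

variable {α : Type*} [LinearOrder α] {k : ℕ}

theorem invSign_eq_prod (l : List α) :
    invSign l = ∏ i : Fin l.length, ∏ j ∈ Ioi i, if l.get j < l.get i then (-1 : ℂ) else 1 := by
  rw [invSign, invCount, ← Finset.prod_const, Finset.prod_filter, Fintype.prod_prod_type]
  refine Finset.prod_congr rfl fun i _ => ?_
  rw [← Finset.filter_lt_eq_Ioi, Finset.prod_filter]
  refine Finset.prod_congr rfl fun j _ => ?_
  exact ite_and ..

theorem invSign_ofFn (f : Fin k → α) :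
    invSign (List.ofFn f) = ∏ i, ∏ j ∈ Ioi i, if f j < f i then (-1 : ℂ) else 1 := by
  have of_length_eq : ∀ (l : List α) (h : l.length = k), invSign l =
      ∏ i : Fin k, ∏ j ∈ Ioi i,
        if l.get (j.cast h.symm) < l.get (i.cast h.symm) then (-1 : ℂ) else 1 := by
    rintro l rfl
    exact invSign_eq_prod l
  simp [of_length_eq (List.ofFn f) (List.length_ofFn)]

theorem invSign_ofFn_strictMono_comp_perm {g : Fin k → α} (hg : StrictMono g)
    (u : Equiv.Perm (Fin k)) : invSign (List.ofFn (g ∘ u)) = (Equiv.Perm.sign u : ℂ) := by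
  rw [invSign_ofFn]
  simp only [Function.comp_apply, hg.lt_iff_lt]
  rw [u.sign_eq_prod_prod_Ioi]
  push_cast
  refine Finset.prod_congr rfl fun i _ => Finset.prod_congr rfl fun j hj => ?_
  rcases (u.injective.ne (Finset.mem_Ioi.mp hj).ne).lt_or_gt with h | h
  · simp [h, h.asymm]
  · simp [h, h.asymm]

theorem invSign_ofFn_comp_perm {f : Fin k → α} (hf : Function.Injective f)
    (u : Equiv.Perm (Fin k)) :
    invSign (List.ofFn (f ∘ u)) = Equiv.Perm.sign u * invSign (List.ofFn f) := by
  set τ := Tuple.sort f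
  have hmono : StrictMono (f ∘ τ) :=
    (Tuple.monotone_sort f).strictMono_of_injective (hf.comp τ.injective)
  have hfu : f ∘ u = (f ∘ τ) ∘ ⇑(τ⁻¹ * u) := by ext; simp
  have hf_eq : f = (f ∘ τ) ∘ ⇑τ⁻¹ := by ext; simp
  rw [hfu, invSign_ofFn_strictMono_comp_perm hmono, hf_eq, invSign_ofFn_strictMono_comp_perm hmono,
    Equiv.Perm.sign_mul]
  push_cast
  ring

end InversionSign

section SortSign

variable {α β γ : Type*} [LinearOrder α] [LinearOrder β] [LinearOrder γ]

noncomputable def sortSign (s : Finset α) (g : α → β) : ℂ := invSign ((s.sort (· ≤ ·)).map g)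

theorem sortSign_eq_invSign_ofFn (s : Finset α) {k : ℕ} (hk : s.card = k) (g : α → β) :
    sortSign s g = invSign (List.ofFn (g ∘ s.orderEmbOfFin hk)) := by
  rw [sortSign]
  congr 1
  refine List.ext_get (by simp [hk]) fun i h₁ h₂ => ?_
  simp [Finset.orderEmbOfFin_apply]

theorem sortSign_comp {g : α → β} {h : β → γ} (hg : Function.Injective g)
    (hh : Function.Injective h) (s : Finset α) :
    sortSign s (h ∘ g) = sortSign (s.image g) h * sortSign s g := by
  have hk : (s.image g).card = s.card := Finset.card_image_of_injective s hg
  set e := s.orderEmbOfFin rfl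
  set τ := Tuple.sort (g ∘ e)
  have hinj : Function.Injective (g ∘ e) := hg.comp e.injective
  have hmono : StrictMono (g ∘ e ∘ τ) :=
    (Tuple.monotone_sort (g ∘ e)).strictMono_of_injective (hinj.comp τ.injective)
  have he' : (s.image g).orderEmbOfFin hk = g ∘ e ∘ τ :=
    (Finset.orderEmbOfFin_unique hk (fun i => Finset.mem_image_of_mem g (by simp [e])) hmono).symm
  have hge : g ∘ e = (g ∘ e ∘ τ) ∘ ⇑τ⁻¹ := by ext; simp
  rw [sortSign_eq_invSign_ofFn _ hk, sortSign_eq_invSign_ofFn s rfl,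
    sortSign_eq_invSign_ofFn s rfl, he', hge, invSign_ofFn_strictMono_comp_perm hmono]
  have hsq : ((Equiv.Perm.sign τ : ℤ) : ℂ) * (Equiv.Perm.sign τ : ℤ) = 1 := by
    rw [← Int.cast_mul, ← Units.val_mul, Int.units_mul_self, Units.val_one, Int.cast_one]
  rw [show h ∘ g ∘ e ∘ τ = (h ∘ (g ∘ e)) ∘ τ from rfl, invSign_ofFn_comp_perm (hh.comp hinj),
    Equiv.Perm.sign_inv, mul_right_comm, hsq, one_mul]
  rfl

end SortSign

theorem delta_eq_pi_single {β : Type*} [DecidableEq β] (r : β) : delta r = Pi.single r 1 := by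
  ext r'
  rw [delta, Pi.single_apply]
  congr

theorem Finset.compl_image_perm {α : Type*} [Fintype α] [DecidableEq α] (σ : Equiv.Perm α)
    (s : Finset α) : (s.image σ)ᶜ = sᶜ.image σ := by
  apply Finset.coe_injective
  push_cast
  exact (Equiv.image_compl σ s).symm

theorem replaceOne_eq_map_swap {α : Type*} [DecidableEq α] {l : List α} {a b : α}
    (hb : b ∉ l) : replaceOne l a b = l.map (Equiv.swap a b) := by
  refine List.map_congr_left fun z hz => ?_
  rw [Equiv.swap_apply_def, if_neg (ne_of_mem_of_not_mem hz hb)]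

section Tabloid

variable {n m : ℕ}

noncomputable def mapCol (σ : Equiv.Perm (Fin (n + m))) (T : Col n m) : Col n m :=
  ⟨T.1.image σ, image_card σ T⟩

theorem mapCol_mul (g h : Equiv.Perm (Fin (n + m))) (T : Col n m) :
    mapCol (g * h) T = mapCol g (mapCol h T) :=
  Subtype.ext (by simp [mapCol, Finset.image_image])

theorem actSign_eq_sortSign (σ : Equiv.Perm (Fin (n + m))) (T : Col n m) :
    actSign σ T = sortSign T.1 σ * sortSign T.1ᶜ σ := rfl

theorem actSign_mul (g h : Equiv.Perm (Fin (n + m))) (T : Col n m) :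
    actSign (g * h) T = actSign g (mapCol h T) * actSign h T := by
  simp only [actSign_eq_sortSign, mapCol, Finset.compl_image_perm, Equiv.Perm.coe_mul]
  rw [sortSign_comp h.injective g.injective, sortSign_comp h.injective g.injective]
  ring

theorem act_delta (σ : Equiv.Perm (Fin (n + m))) (T : Col n m) :
    act σ (delta T) = actSign σ T • delta (mapCol σ T) := by
  simp [act, delta_eq_pi_single, Pi.single_apply, mapCol]

noncomputable def actLin (σ : Equiv.Perm (Fin (n + m))) : Mt n m →ₗ[ℂ] Mt n m where
  toFun := act σ
  map_add' f g := by simp [act, add_smul, Finset.sum_add_distrib]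
  map_smul' c f := by simp [act, Finset.smul_sum, smul_smul, mul_assoc]

@[simp]
theorem actLin_apply (σ : Equiv.Perm (Fin (n + m))) (f : Mt n m) : actLin σ f = act σ f := rfl

theorem act_mul (g h : Equiv.Perm (Fin (n + m))) (f : Mt n m) :
    act (g * h) f = act g (act h f) := by
  have : actLin (g * h) = (actLin g).comp (actLin h) := by
    refine (Pi.basisFun ℂ (Col n m)).ext fun T => ?_
    simp only [Pi.basisFun_apply, ← delta_eq_pi_single, LinearMap.comp_apply, actLin_apply,
      act_delta, map_smul, actSign_mul, mapCol_mul, mul_smul]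
    exact smul_comm _ _ _
  exact LinearMap.congr_fun this f

theorem swapSet_eq_image {T : Col n m} {x : Fin (n + m)} (hx : x ∈ T.1) (j : Fin m) :
    swapSet T x j = T.1.image (Equiv.swap x (yel T j)) := by
  have hy := yel_not_mem T j
  ext a
  simp only [swapSet, Finset.mem_insert, Finset.mem_erase, Finset.mem_image]
  grind

theorem swapTerm_eq_act (T : Col n m) (x : {a // a ∈ T.1}) (j : Fin m) :
    swapTerm T x j = act (Equiv.swap x.1 (yel T j)) (delta T) := by
  have hy : yel T j ∉ T.1.sort (· ≤ ·) := by simpa using yel_not_mem T j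
  have hx : x.1 ∉ (T.1ᶜ).sort (· ≤ ·) := by simp
  rw [act_delta, swapTerm, actSign_eq_sortSign, sortSign, sortSign,
    replaceOne_eq_map_swap hy, replaceOne_eq_map_swap hx, Equiv.swap_comm (yel T j)]
  congr 2
  exact Subtype.ext (swapSet_eq_image x.2 j)

theorem sum_yel_eq_sum_compl {M : Type*} [AddCommMonoid M] (T : Col n m)
    (F : Fin (n + m) → M) :
    ∑ j, F (yel T j) = ∑ y ∈ T.1ᶜ, F y := by
  rw [← Finset.map_orderEmbOfFin_univ T.1ᶜ (card_compl' T), Finset.sum_map]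
  rfl

theorem etaBasis_eq_sum_swap (T : Col n m) :
    etaBasis T = (m : ℂ) • delta T -
      ∑ y ∈ T.1ᶜ, ∑ x ∈ T.1, act (Equiv.swap x y) (delta T) := by
  rw [etaBasis, ← sum_yel_eq_sum_compl T fun y => ∑ x ∈ T.1, act (Equiv.swap x y) (delta T)]
  congr 1
  refine Finset.sum_congr rfl fun j _ => ?_
  rw [← Finset.sum_attach T.1]
  exact Finset.sum_congr rfl fun x _ => swapTerm_eq_act T x j

theorem act_etaBasis (σ : Equiv.Perm (Fin (n + m))) (T : Col n m) :
    act σ (etaBasis T) = actSign σ T • etaBasis (mapCol σ T) := by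
  have hconj : ∀ x y, act σ (act (Equiv.swap x y) (delta T)) =
      actSign σ T • act (Equiv.swap (σ x) (σ y)) (delta (mapCol σ T)) := fun x y => by
    rw [← act_mul, Equiv.mul_swap_eq_swap_mul, act_mul, act_delta, ← actLin_apply, map_smul,
      actLin_apply]
  have hreindex : ∑ y ∈ (mapCol σ T).1ᶜ, ∑ x ∈ (mapCol σ T).1,
      act (Equiv.swap x y) (delta (mapCol σ T)) =
      ∑ y ∈ T.1ᶜ, ∑ x ∈ T.1, act (Equiv.swap (σ x) (σ y)) (delta (mapCol σ T)) := by
    simp only [mapCol, Finset.compl_image_perm,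
      Finset.sum_image fun a _ b _ h => σ.injective h]
  rw [etaBasis_eq_sum_swap, etaBasis_eq_sum_swap, hreindex, ← actLin_apply, map_sub, map_smul,
    map_sum, smul_sub, Finset.smul_sum, actLin_apply, act_delta, smul_comm]
  simp only [map_sum, actLin_apply, hconj, Finset.smul_sum]

theorem etaLin_delta (T : Col n m) : etaLin n m (delta T) = etaBasis T := by
  show etaFun (delta T) = etaBasis T
  simp [etaFun, delta_eq_pi_single, Pi.single_apply]

end Tabloid

theorem eta_equivariant_general (n m : ℕ)
    (σ : Equiv.Perm (Fin (n + m))) (v : Mt n m) :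
    etaFun (act σ v) = act σ (etaFun v) := by
  have hcomm : (etaLin n m).comp (actLin σ) = (actLin σ).comp (etaLin n m) := by
    refine (Pi.basisFun ℂ (Col n m)).ext fun T => ?_
    simp only [Pi.basisFun_apply, ← delta_eq_pi_single, LinearMap.comp_apply, actLin_apply,
      act_delta, map_smul, etaLin_delta, act_etaBasis]
  exact LinearMap.congr_fun hcomm v

/-- The operator `η` is `S_{n+m}`-equivariant: for every
permutation `σ` of `{1,…,n+m}` and every `v ∈ M̃`, `η(σ·v) = σ·η(v)`. -/
theorem eta_equivariant (n m : ℕ) (hm : 1 ≤ m) (hmn : m ≤ n)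
    (σ : Equiv.Perm (Fin (n + m))) (v : Mt n m) :
    etaFun (act σ v) = act σ (etaFun v) :=
  eta_equivariant_general n m σ v
end

section
/- For all n-element subsets S, T of {1,…,N}, the coefficient ⟨η(v_S), v_T⟩ of v_T in the expansion of η(v_S) in the basis {v_T} equals: m if S = T; 0 if |S ∩ T| < n−1; and (−1)^{x+y} if |S ∩ T| = n−1, where x is the unique element of S∖T and y is the unique element of T∖S. -/
open Finset

/-!
A swap replaces one entry of the first column, so `η(v_S)` has no diagonal swap term and reaches
only the `T` with `|S ∩ T| = n - 1`, each exactly once, by exchanging the `x ∈ S \ T` with the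
`y ∈ T \ S`. Replacing `x` by `y` in a sorted list creates one inversion per entry strictly
between them; over both columns these entries are the `|x - y| - 1` integers between `x` and `y`,
so the swap carries the sign `(-1)^(x+y+1)`.
-/

namespace List

theorem card_filter_get {α : Type*} (p : α → Prop) [DecidablePred p] (l : List α) :
    #{j : Fin l.length | p (l.get j)} = l.countP p := by
  induction l with
  | nil => simp
  | cons a l ih =>
    rw [countP_cons, ← ih]
    erw [Fin.card_filter_univ_succ (n := l.length)]
    by_cases h : p a <;> simp [h, add_comm]

end List

theorem Fin.card_inversions_succ {α : Type*} [LinearOrder α] {k : ℕ} (f : Fin (k + 1) → α) :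
    #{p : Fin (k + 1) × Fin (k + 1) | p.1 < p.2 ∧ f p.2 < f p.1} =
      #{j : Fin k | f j.succ < f 0} +
        #{p : Fin k × Fin k | p.1 < p.2 ∧ f p.2.succ < f p.1.succ} := by
  simp only [Finset.card_filter, Fintype.sum_prod_type, Fin.sum_univ_succ, Fin.succ_pos,
    Fin.succ_lt_succ_iff, Fin.not_lt_zero, false_and, true_and, if_false, zero_add]

theorem Finset.countP_sort {α : Type*} [LinearOrder α] (s : Finset α) (p : α → Prop)
    [DecidablePred p] : (s.sort (· ≤ ·)).countP p = #{a ∈ s | p a} := by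
  rw [← Multiset.coe_countP, Finset.sort_eq, Multiset.countP_eq_card_filter]
  rfl

theorem Finset.eq_insert_erase_of_card_inter {α : Type*} [DecidableEq α] {s t : Finset α}
    (hst : #s = #t) (hinter : #(s ∩ t) = #s - 1) {x y : α} (hx : x ∈ s \ t) (hy : y ∈ t \ s) :
    t = insert y (s.erase x) := by
  have hxs := (mem_sdiff.mp hx).1
  have hpos := card_pos.mpr ⟨x, hxs⟩
  have hsdiff : #(t \ s) = 1 := by
    rw [card_sdiff, hinter]
    omega
  refine eq_of_subset_of_card_le (fun z hz => ?_) ?_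
  · by_cases hzs : z ∈ s
    · exact mem_insert_of_mem (mem_erase.mpr ⟨fun h => (mem_sdiff.mp hx).2 (h ▸ hz), hzs⟩)
    · exact mem_insert.mpr (Or.inl (card_le_one.mp hsdiff.le z (mem_sdiff.mpr ⟨hz, hzs⟩) y hy))
  · rw [card_insert_of_notMem (fun h => (mem_sdiff.mp hy).2 (mem_of_mem_erase h)),
      card_erase_of_mem hxs]
    omega

theorem Finset.insert_erase_eq_insert_erase_iff {α : Type*} [DecidableEq α] {s : Finset α}
    {x x' y y' : α} (hx' : x' ∈ s) (hy : y ∉ s) (hy' : y' ∉ s) :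
    insert y (s.erase x) = insert y' (s.erase x') ↔ x = x' ∧ y = y' := by
  refine ⟨fun h => ?_, fun ⟨hxx, hyy⟩ => hxx ▸ hyy ▸ rfl⟩
  have hy_mem := Finset.ext_iff.mp h y
  have hx'_mem := Finset.ext_iff.mp h x'
  simp only [mem_insert, mem_erase] at hy_mem hx'_mem
  grind

theorem replaceOne_cons {α : Type*} [DecidableEq α] (a : α) (l : List α) (x y : α) :
    replaceOne (a :: l) x y = (if a = x then y else a) :: replaceOne l x y := rfl

theorem replaceOne_of_not_mem {α : Type*} [DecidableEq α] {l : List α} {x : α} (y : α)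
    (hx : x ∉ l) : replaceOne l x y = l :=
  (List.map_congr_left fun _ hz => if_neg (ne_of_mem_of_not_mem hz hx)).trans (List.map_id' l)

section Inversions

variable {α : Type*} [LinearOrder α]

theorem invCount_cons (a : α) (l : List α) :
    invCount (a :: l) = l.countP (· < a) + invCount l := by
  rw [invCount, invCount, ← List.card_filter_get]
  exact Fin.card_inversions_succ (a :: l).get

theorem invCount_eq_zero {l : List α} (hl : l.Pairwise (· < ·)) : invCount l = 0 := by
  induction l with
  | nil => rfl
  | cons a l ih =>
    rw [List.pairwise_cons] at hl
    rw [invCount_cons, ih hl.2, List.countP_eq_zero.mpr]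
    intro b hb
    simpa using (hl.1 b hb).le

theorem invCount_replaceOne {l : List α} (hl : l.Pairwise (· < ·)) {x y : α} (hx : x ∈ l)
    (hy : y ∉ l) :
    invCount (replaceOne l x y) = l.countP (fun z => min x y < z ∧ z < max x y) := by
  induction l with
  | nil => simp at hx
  | cons a l ih =>
    rw [List.pairwise_cons] at hl
    rw [List.mem_cons, not_or] at hy
    rw [replaceOne_cons, invCount_cons, List.countP_cons]
    rcases List.mem_cons.mp hx with rfl | hxl
    · have hxl : x ∉ l := fun h => (hl.1 x h).false
      have hxx : ¬(min x y < x ∧ x < max x y) := by grind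
      rw [if_pos rfl, replaceOne_of_not_mem y hxl, invCount_eq_zero hl.2]
      simp only [hxx, decide_false, Bool.false_eq_true, if_false, add_zero]
      refine List.countP_congr fun z hz => ?_
      have := hl.1 z hz
      grind
    · have hax := hl.1 x hxl
      have hbetween : (min x y < a ∧ a < max x y) ↔ y < a := by grind
      rw [if_neg hax.ne, ih hl.2 hxl hy.2, add_comm, replaceOne, List.countP_map]
      congr 1
      simp only [hbetween]
      by_cases hya : y < a
      · rw [if_pos (decide_eq_true hya), ← List.count_eq_one_of_mem hl.2.nodup hxl]
        refine List.countP_congr fun z hz => ?_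
        have := hl.1 z hz
        grind
      · rw [if_neg (by simpa using hya), List.countP_eq_zero]
        intro z hz
        have := hl.1 z hz
        grind

end Inversions

theorem invSign_replaceOne_mul {k : ℕ} {A : Finset (Fin k)} {x y : Fin k} (hx : x ∈ A)
    (hy : y ∉ A) :
    invSign (replaceOne (A.sort (· ≤ ·)) x y) * invSign (replaceOne (Aᶜ.sort (· ≤ ·)) y x) =
      (-1 : ℂ) ^ ((x : ℕ) + y + 1) := by
  have hxy : (x : ℕ) ≠ y := fun h => hy (Fin.ext h ▸ hx)
  have hsplit : #{z ∈ A | min x y < z ∧ z < max x y} + #{z ∈ Aᶜ | min x y < z ∧ z < max x y} =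
      #(Finset.Ioo (min x y) (max x y)) := by
    rw [← Finset.card_union_of_disjoint (Finset.disjoint_filter_filter disjoint_compl_right),
      ← Finset.filter_union, Finset.union_compl]
    congr 1
    ext z
    simp [Finset.mem_Ioo]
  rw [invSign, invSign, ← pow_add,
    invCount_replaceOne A.sortedLT_sort.pairwise (by simpa using hx) (by simpa using hy),
    invCount_replaceOne Aᶜ.sortedLT_sort.pairwise (by simpa using hy) (by simpa using hx),
    min_comm y, max_comm y, Finset.countP_sort, Finset.countP_sort, hsplit, Fin.card_Ioo,
    neg_one_pow_eq_pow_mod_two, neg_one_pow_eq_pow_mod_two (n := (x : ℕ) + y + 1)]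
  congr 1
  simp only [Fin.coe_max, Fin.coe_min]
  omega

theorem delta_apply {β : Type*} [DecidableEq β] (r r' : β) :
    delta r r' = if r' = r then 1 else 0 := by
  simp only [delta]
  congr

section Eta

variable {n m : ℕ}

theorem etaFun_delta (S : Col n m) : etaFun (delta S) = etaBasis S := by
  classical
  simp [etaFun, delta_apply, ite_smul]

theorem etaBasis_apply (S T : Col n m) :
    etaBasis S T = m * delta S T - ∑ j, ∑ x ∈ S.1.attach, swapTerm S x j T := by
  simp only [etaBasis, Pi.sub_apply, Pi.smul_apply, smul_eq_mul, Finset.sum_apply]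

theorem swapTerm_apply_of_ne {S T : Col n m} {x : {a // a ∈ S.1}} {j : Fin m}
    (h : swapSet S x j ≠ T.1) : swapTerm S x j T = 0 := by
  classical
  simp [swapTerm, delta_apply, Subtype.ext_iff, Ne.symm h]

theorem swapTerm_apply_of_eq {S T : Col n m} {x : {a // a ∈ S.1}} {j : Fin m}
    (h : swapSet S x j = T.1) :
    swapTerm S x j T = invSign (replaceOne (S.1.sort (· ≤ ·)) x (yel S j)) *
      invSign (replaceOne (S.1ᶜ.sort (· ≤ ·)) (yel S j) x) := by
  classical
  simp [swapTerm, delta_apply, h]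

theorem yel_mem_swapSet (S : Col n m) (x : Fin (n + m)) (j : Fin m) : yel S j ∈ swapSet S x j :=
  Finset.mem_insert_self _ _

theorem card_inter_swapSet (S : Col n m) {x : Fin (n + m)} (hx : x ∈ S.1) (j : Fin m) :
    #(S.1 ∩ swapSet S x j) = n - 1 := by
  rw [swapSet, Finset.inter_insert_of_notMem (yel_not_mem S j),
    Finset.inter_eq_right.mpr (Finset.erase_subset x S.1), Finset.card_erase_of_mem hx, S.2]

theorem exists_yel_eq (S : Col n m) {y : Fin (n + m)} (hy : y ∉ S.1) : ∃ j, yel S j = y := by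
  have : y ∈ Set.range (S.1ᶜ.orderEmbOfFin (card_compl' S)) := by
    simpa [Finset.range_orderEmbOfFin] using hy
  exact this

theorem yel_injective (S : Col n m) : Function.Injective (yel S) :=
  (S.1ᶜ.orderEmbOfFin (card_compl' S)).injective

theorem sum_swapTerm_apply_eq_zero {S T : Col n m}
    (h : ∀ x ∈ S.1, ∀ j, swapSet S x j ≠ T.1) :
    ∑ j, ∑ x ∈ S.1.attach, swapTerm S x j T = 0 :=
  Finset.sum_eq_zero fun j _ => Finset.sum_eq_zero fun x _ => swapTerm_apply_of_ne (h x x.2 j)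

theorem sum_swapTerm_apply_of_eq_insert_erase {S T : Col n m} {x y : Fin (n + m)}
    (hx : x ∈ S.1) (hy : y ∉ S.1) (hT : T.1 = insert y (S.1.erase x)) :
    ∑ j, ∑ x ∈ S.1.attach, swapTerm S x j T = (-1 : ℂ) ^ ((x : ℕ) + y + 1) := by
  have hswap : ∀ (x' : {a // a ∈ S.1}) j, swapSet S x' j = T.1 ↔ x' = ⟨x, hx⟩ ∧ yel S j = y := by
    intro x' j
    rw [hT, swapSet, Finset.insert_erase_eq_insert_erase_iff hx (yel_not_mem S j) hy,
      Subtype.ext_iff]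
  obtain ⟨j₀, hj₀⟩ := exists_yel_eq S hy
  rw [Finset.sum_eq_single j₀, Finset.sum_eq_single ⟨x, hx⟩,
    swapTerm_apply_of_eq ((hswap _ _).mpr ⟨rfl, hj₀⟩), hj₀, invSign_replaceOne_mul hx hy]
  · exact fun x' _ hx' => swapTerm_apply_of_ne fun h => hx' ((hswap x' j₀).mp h).1
  · exact fun h => absurd (Finset.mem_attach _ _) h
  · exact fun j _ hj => Finset.sum_eq_zero fun x' _ =>
      swapTerm_apply_of_ne fun h => hj (yel_injective S (((hswap x' j).mp h).2.trans hj₀.symm))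
  · exact fun h => absurd (Finset.mem_univ _) h

end Eta

theorem eta_coefficients_general (n m : ℕ) (S T : Col n m) :
    (S = T → etaFun (delta S) T = (m : ℂ)) ∧
    ((S.1 ∩ T.1).card < n - 1 → etaFun (delta S) T = 0) ∧
    ((S.1 ∩ T.1).card = n - 1 →
      ∀ x ∈ S.1 \ T.1, ∀ y ∈ T.1 \ S.1,
        etaFun (delta S) T = (-1 : ℂ) ^ (((x : ℕ) + 1) + ((y : ℕ) + 1))) := by
  classical
  rw [etaFun_delta, etaBasis_apply, delta_apply]
  refine ⟨?_, fun hlt => ?_, fun hcard x hx y hy => ?_⟩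
  · rintro rfl
    rw [if_pos rfl, sum_swapTerm_apply_eq_zero fun x _ j h =>
      yel_not_mem S j (h ▸ yel_mem_swapSet S x j)]
    ring
  · have hTS : T ≠ S := by
      rintro rfl
      rw [Finset.inter_self, T.2] at hlt
      omega
    rw [if_neg hTS, sum_swapTerm_apply_eq_zero fun x hx j h => by
      rw [← h, card_inter_swapSet S hx j] at hlt; omega]
    ring
  · obtain ⟨hxS, -⟩ := Finset.mem_sdiff.mp hx
    obtain ⟨hyT, hyS⟩ := Finset.mem_sdiff.mp hy
    have hT := Finset.eq_insert_erase_of_card_inter (S.2.trans T.2.symm) (by rw [hcard, S.2]) hx hy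
    rw [if_neg (fun h : T = S => hyS (h ▸ hyT)), sum_swapTerm_apply_of_eq_insert_erase hxS hyS hT]
    ring

/-- The coefficient `⟨η(v_S), v_T⟩` equals `m` if `S = T`,
`0` if `|S ∩ T| < n - 1`, and `(-1)^{x+y}` if `|S ∩ T| = n - 1`, where `x` is the
unique element of `S \ T` and `y` the unique element of `T \ S` (elements of
`Fin (n+m)` are identified with `{1, …, n+m}` via `x ↦ x + 1`). -/
theorem eta_coefficients (n m : ℕ) (hm : 1 ≤ m) (hmn : m ≤ n) (S T : Col n m) :
    (S = T → etaFun (delta S) T = (m : ℂ)) ∧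
    ((S.1 ∩ T.1).card < n - 1 → etaFun (delta S) T = 0) ∧
    ((S.1 ∩ T.1).card = n - 1 →
      ∀ x ∈ S.1 \ T.1, ∀ y ∈ T.1 \ S.1,
        etaFun (delta S) T = (-1 : ℂ) ^ (((x : ℕ) + 1) + ((y : ℕ) + 1))) :=
  eta_coefficients_general n m S T
end
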